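/- Let Φ be a Young function and φ ∈ G^dec (almost decreasing, with φ(r)rⁿ almost increasing) satisfying ∫_0^r φ(t)t^{n−1} dt ≤ C φ(r) rⁿ for all r > 0. Then the function g(x) = Φ⁻¹(φ(|x|)) belongs to the Orlicz–Morrey space L^{(Φ,φ)}(ℝⁿ), with ‖g‖_{L^{(Φ,φ)}} bounded by a constant depending only on Φ, φ, and n. -/

import Mathlib

/-! Left continuity gives `Φ (Φ⁻¹ u) ≤ u` and convexity gives `Φ (x / L) ≤ Φ x / L` for `L ≥ 1`,
so it suffices to bound `∫_{B(a,r)} φ(|x|) dx` by a multiple of `φ(r) |B(a,r)|`. Outside `B(0,r)`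
the integrand is at most a multiple of `φ(r)` because `φ` is almost decreasing. On `B(0,r)` we pass
to the decreasing, hence measurable, majorant `t ↦ sup_{s ≥ t} φ(s)`, which is comparable to `φ`,
and integrate in polar coordinates, which produces `∫_0^r φ(t) tⁿ⁻¹ dt ≲ φ(r) rⁿ`. -/

open MeasureTheory ENNReal NNReal Metric Set Filter Topology

noncomputable def geninv (Φ : ℝ≥0∞ → ℝ≥0∞) (u : ℝ≥0∞) : ℝ≥0∞ :=
  sInf {t : ℝ≥0∞ | u < Φ t}

/-- Generalized Young function (class Φ_Y of the paper): increasing, vanishing at 0,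
infinite at ∞, convex, left continuous, nondegenerate. -/
def IsYoung (Φ : ℝ≥0∞ → ℝ≥0∞) : Prop :=
  Monotone Φ ∧ Φ 0 = 0 ∧ Φ ⊤ = ⊤ ∧
    (∀ x y a b : ℝ≥0∞, a + b = 1 → Φ (a * x + b * y) ≤ a * Φ x + b * Φ y) ∧
    (∀ t : ℝ≥0∞, 0 < t → ContinuousWithinAt Φ (Set.Iio t) t) ∧
    (∃ t : ℝ≥0∞, 0 < t ∧ Φ t < ⊤) ∧ (∃ t : ℝ≥0∞, t ≠ ⊤ ∧ 0 < Φ t)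

/-- The class `G^dec`: positive, almost decreasing, and `r ↦ φ(r) rⁿ` almost increasing. -/
def Gdec (n : ℕ) (φ : ℝ → ℝ≥0∞) : Prop :=
  (∀ r : ℝ, 0 < r → 0 < φ r ∧ φ r < ⊤) ∧
    ∃ C : ℝ≥0∞, 0 < C ∧ C ≠ ⊤ ∧ ∀ r s : ℝ, 0 < r → r < s →
      φ s ≤ C * φ r ∧ φ r * ENNReal.ofReal r ^ n ≤ C * (φ s * ENNReal.ofReal s ^ n)

/-- Orlicz–Morrey functional on a single ball `B(a,r)`. -/
noncomputable def ballNorm (Φ : ℝ≥0∞ → ℝ≥0∞) (φ : ℝ → ℝ≥0∞) {d : ℕ}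
    (a : EuclideanSpace ℝ (Fin d)) (r : ℝ) (f : EuclideanSpace ℝ (Fin d) → ℝ≥0∞) : ℝ≥0∞ :=
  sInf {l : ℝ≥0∞ | 0 < l ∧
    (∫⁻ x in ball a r, Φ (f x / l)) ≤ φ r * volume (ball a r)}

/-- Weak Orlicz–Morrey functional on a single ball `B(a,r)`. -/
noncomputable def wBallNorm (Φ : ℝ≥0∞ → ℝ≥0∞) (φ : ℝ → ℝ≥0∞) {d : ℕ}
    (a : EuclideanSpace ℝ (Fin d)) (r : ℝ) (f : EuclideanSpace ℝ (Fin d) → ℝ≥0∞) : ℝ≥0∞ :=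
  sInf {l : ℝ≥0∞ | 0 < l ∧ ∀ t : ℝ≥0∞, 0 < t → t ≠ ⊤ →
    Φ t * volume {x ∈ ball a r | t < f x / l} ≤ φ r * volume (ball a r)}

/-- Orlicz–Morrey norm. -/
noncomputable def omNorm (Φ : ℝ≥0∞ → ℝ≥0∞) (φ : ℝ → ℝ≥0∞) {d : ℕ}
    (f : EuclideanSpace ℝ (Fin d) → ℝ≥0∞) : ℝ≥0∞ :=
  ⨆ (a : EuclideanSpace ℝ (Fin d)) (r : ℝ) (_ : 0 < r), ballNorm Φ φ a r f

/-- Weak Orlicz–Morrey norm. -/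
noncomputable def womNorm (Φ : ℝ≥0∞ → ℝ≥0∞) (φ : ℝ → ℝ≥0∞) {d : ℕ}
    (f : EuclideanSpace ℝ (Fin d) → ℝ≥0∞) : ℝ≥0∞ :=
  ⨆ (a : EuclideanSpace ℝ (Fin d)) (r : ℝ) (_ : 0 < r), wBallNorm Φ φ a r f

theorem lintegral_fun_norm_addHaar {E : Type*} [NormedAddCommGroup E] [NormedSpace ℝ E]
    [MeasurableSpace E] [BorelSpace E] [FiniteDimensional ℝ E] [Nontrivial E]
    (μ : Measure E) [μ.IsAddHaarMeasure] {f : ℝ → ℝ≥0∞} (hf : Measurable f) :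
    ∫⁻ x, f ‖x‖ ∂μ = Module.finrank ℝ E * μ (ball 0 1) *
      ∫⁻ y in Ioi 0, ENNReal.ofReal (y ^ (Module.finrank ℝ E - 1)) * f y := by
  calc ∫⁻ x, f ‖x‖ ∂μ = ∫⁻ x : ({0}ᶜ : Set E), f ‖x.1‖ ∂(μ.comap (↑)) := by
        rw [lintegral_subtype_comap (measurableSet_singleton _).compl (fun x ↦ f ‖x‖),
          restrict_compl_singleton]
    _ = ∫⁻ x, f x.2 ∂(μ.toSphere.prod (Measure.volumeIoiPow (Module.finrank ℝ E - 1))) := by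
        simpa using μ.measurePreserving_homeomorphUnitSphereProd.lintegral_comp_emb
          (Homeomorph.measurableEmbedding _) (f ∘ Subtype.val ∘ Prod.snd)
    _ = μ.toSphere univ * ∫⁻ y, f y ∂(Measure.volumeIoiPow (Module.finrank ℝ E - 1)) := by
        simpa using lintegral_prod_mul (μ := μ.toSphere) (f := fun _ ↦ (1 : ℝ≥0∞))
          (g := f ∘ Subtype.val) aemeasurable_const (hf.comp measurable_subtype_coe).aemeasurable
    _ = _ := by
        rw [Measure.toSphere_apply_univ, Measure.volumeIoiPow,
          lintegral_withDensity_eq_lintegral_mul _ (by fun_prop)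
            (g := fun y : Ioi (0 : ℝ) ↦ f y) (hf.comp measurable_subtype_coe),
          ← lintegral_subtype_comap measurableSet_Ioi]
        rfl

def AlmostAntitone (C : ℝ≥0∞) (φ : ℝ → ℝ≥0∞) : Prop :=
  ∀ ⦃s t : ℝ⦄, 0 < s → s ≤ t → φ t ≤ C * φ s

namespace AlmostAntitone

variable {C : ℝ≥0∞} {φ : ℝ → ℝ≥0∞}

theorem exists_antitone_le_mul (hφ : AlmostAntitone C φ) :
    ∃ ψ : ℝ → ℝ≥0∞, Antitone ψ ∧ φ ≤ ψ ∧ ∀ t, 0 < t → ψ t ≤ C * φ t :=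
  ⟨fun t ↦ ⨆ s ∈ Ici t, φ s, fun _ _ hst ↦ biSup_mono fun _ hs ↦ hst.trans hs,
    fun _ ↦ le_biSup φ (mem_Ici.2 le_rfl), fun _ ht ↦ iSup₂_le fun _ hs ↦ hφ ht hs⟩

theorem not_forall_lintegral_Ioc_le (hφ : AlmostAntitone C φ) (hC : C ≠ ⊤)
    (hpos : ∀ r, 0 < r → φ r ≠ 0 ∧ φ r ≠ ⊤) {C₀ : ℝ≥0∞} (hC₀ : C₀ ≠ ⊤) :
    ¬ ∀ r, 0 < r → ∫⁻ t in Ioc 0 r, φ t ≤ C₀ * φ r := by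
  intro h
  have hbound : ∀ r, 0 < r → ENNReal.ofReal r ≤ C * C₀ := by
    intro r hr
    have : ENNReal.ofReal r * φ r ≤ C * C₀ * φ r :=
      calc ENNReal.ofReal r * φ r = ∫⁻ _ in Ioc 0 r, φ r := by
            rw [setLIntegral_const, Real.volume_Ioc, sub_zero, mul_comm]
        _ ≤ ∫⁻ t in Ioc 0 r, C * φ t := setLIntegral_mono' measurableSet_Ioc fun t ht ↦ hφ ht.1 ht.2
        _ = C * ∫⁻ t in Ioc 0 r, φ t := lintegral_const_mul' _ _ hC
        _ ≤ C * C₀ * φ r := by rw [mul_assoc]; gcongr; exact h r hr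
    exact (ENNReal.mul_le_mul_iff_left (hpos r hr).1 (hpos r hr).2).1 this
  have hfin : C * C₀ ≠ ⊤ := ENNReal.mul_ne_top hC hC₀
  have := hbound ((C * C₀).toReal + 1) (by positivity)
  rw [ENNReal.ofReal_le_iff_le_toReal hfin] at this
  linarith

variable {E : Type*} [NormedAddCommGroup E] [NormedSpace ℝ E] [MeasurableSpace E] [BorelSpace E]
  [FiniteDimensional ℝ E] [Nontrivial E] (μ : Measure E) [μ.IsAddHaarMeasure]

theorem setLIntegral_ball_zero_fun_norm_le (hφ : AlmostAntitone C φ) (hC : C ≠ ⊤) (r : ℝ) :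
    ∫⁻ x in ball 0 r, φ ‖x‖ ∂μ ≤ C * (Module.finrank ℝ E * μ (ball 0 1) *
      ∫⁻ t in Ioc 0 r, φ t * ENNReal.ofReal t ^ (Module.finrank ℝ E - 1)) := by
  obtain ⟨ψ, hψ, hφψ, hψφ⟩ := hφ.exists_antitone_le_mul
  set n := Module.finrank ℝ E
  calc ∫⁻ x in ball 0 r, φ ‖x‖ ∂μ ≤ ∫⁻ x, (Iio r).indicator ψ ‖x‖ ∂μ := by
        rw [← lintegral_indicator measurableSet_ball]
        refine lintegral_mono fun x ↦ ?_
        by_cases hx : x ∈ ball (0 : E) r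
        · rw [indicator_of_mem hx, indicator_of_mem (show ‖x‖ ∈ Iio r from mem_ball_zero_iff.1 hx)]
          exact hφψ _
        · rw [indicator_of_notMem hx]
          exact zero_le
    _ = n * μ (ball 0 1) * ∫⁻ y in Ioi 0, ENNReal.ofReal (y ^ (n - 1)) * (Iio r).indicator ψ y :=
        lintegral_fun_norm_addHaar μ (hψ.measurable.indicator measurableSet_Iio)
    _ ≤ n * μ (ball 0 1) * ∫⁻ y in Ioi 0,
          (Ioc 0 r).indicator (fun t ↦ C * (φ t * ENNReal.ofReal t ^ (n - 1))) y := by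
        gcongr _ * ?_
        refine setLIntegral_mono' measurableSet_Ioi fun y (hy : 0 < y) ↦ ?_
        by_cases hyr : y ∈ Iio r
        · rw [indicator_of_mem hyr, indicator_of_mem (show y ∈ Ioc 0 r from ⟨hy, le_of_lt hyr⟩)]
          calc ENNReal.ofReal (y ^ (n - 1)) * ψ y ≤ ENNReal.ofReal y ^ (n - 1) * (C * φ y) := by
                rw [ENNReal.ofReal_pow hy.le]; gcongr; exact hψφ y hy
            _ = C * (φ y * ENNReal.ofReal y ^ (n - 1)) := by ring
        · simp [hyr]
    _ = C * (n * μ (ball 0 1) * ∫⁻ t in Ioc 0 r, φ t * ENNReal.ofReal t ^ (n - 1)) := by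
        rw [setLIntegral_indicator measurableSet_Ioc, inter_eq_left.2 Ioc_subset_Ioi_self,
          lintegral_const_mul' _ _ hC]
        ring

theorem setLIntegral_ball_fun_norm_le (hφ : AlmostAntitone C φ) (hC : C ≠ ⊤) {C₀ : ℝ≥0∞}
    (hint : ∀ r : ℝ, 0 < r → ∫⁻ t in Ioc 0 r, φ t * ENNReal.ofReal t ^ (Module.finrank ℝ E - 1) ≤
      C₀ * (φ r * ENNReal.ofReal r ^ Module.finrank ℝ E))
    (a : E) {r : ℝ} (hr : 0 < r) :
    ∫⁻ x in ball a r, φ ‖x‖ ∂μ ≤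
      (C * Module.finrank ℝ E * C₀ + C) * (φ r * μ (ball a r)) := by
  set n := Module.finrank ℝ E
  have hsplit : ∀ x : E, φ ‖x‖ ≤ (ball 0 r).indicator (fun y ↦ φ ‖y‖) x + C * φ r := by
    intro x
    by_cases hx : x ∈ ball (0 : E) r
    · rw [indicator_of_mem hx]
      exact le_self_add
    · rw [indicator_of_notMem hx, zero_add]
      exact hφ hr (not_lt.1 fun h ↦ hx (mem_ball_zero_iff.2 h))
  calc ∫⁻ x in ball a r, φ ‖x‖ ∂μ
      ≤ ∫⁻ x in ball a r, ((ball 0 r).indicator (fun y ↦ φ ‖y‖) x + C * φ r) ∂μ :=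
        lintegral_mono hsplit
    _ = ∫⁻ x in ball a r, (ball 0 r).indicator (fun y ↦ φ ‖y‖) x ∂μ + C * φ r * μ (ball a r) := by
        rw [lintegral_add_right _ measurable_const, setLIntegral_const]
    _ ≤ ∫⁻ x in ball 0 r, φ ‖x‖ ∂μ + C * φ r * μ (ball a r) := by
        gcongr ?_ + _
        exact (setLIntegral_le_lintegral _ _).trans_eq (lintegral_indicator measurableSet_ball _)
    _ ≤ C * (n * μ (ball 0 1) * (C₀ * (φ r * ENNReal.ofReal r ^ n))) + C * φ r * μ (ball a r) := by
        gcongr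
        exact (hφ.setLIntegral_ball_zero_fun_norm_le μ hC r).trans (by gcongr; exact hint r hr)
    _ = (C * n * C₀ + C) * (φ r * μ (ball a r)) := by
        rw [μ.addHaar_ball_of_pos a hr, ENNReal.ofReal_pow hr.le]
        ring

end AlmostAntitone

theorem Gdec.exists_almostAntitone {n : ℕ} {φ : ℝ → ℝ≥0∞} (hφ : Gdec n φ) :
    ∃ C : ℝ≥0∞, C ≠ ⊤ ∧ AlmostAntitone C φ := by
  obtain ⟨-, C, -, hC, hdec⟩ := hφ
  refine ⟨max C 1, by simp [hC], fun s t hs hst ↦ ?_⟩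
  rcases hst.lt_or_eq with hst | rfl
  · exact (hdec s t hs hst).1.trans (by gcongr; exact le_max_left _ _)
  · exact le_mul_of_one_le_left zero_le (le_max_right _ _)

namespace IsYoung

variable {Φ : ℝ≥0∞ → ℝ≥0∞}

theorem apply_geninv_le (hΦ : IsYoung Φ) (u : ℝ≥0∞) : Φ (geninv Φ u) ≤ u := by
  obtain ⟨-, hΦ0, -, -, hleft, -, -⟩ := hΦ
  have hbelow : ∀ t < geninv Φ u, Φ t ≤ u := fun t ht ↦
    not_lt.1 fun hu ↦ (sInf_le (show t ∈ {t | u < Φ t} from hu)).not_gt ht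
  rcases (zero_le : 0 ≤ geninv Φ u).eq_or_lt with h | h
  · rw [← h, hΦ0]
    exact zero_le
  · have : (𝓝[<] geninv Φ u).NeBot := nhdsLT_neBot_of_exists_lt ⟨0, h⟩
    exact le_of_tendsto (hleft _ h) (eventually_nhdsWithin_of_forall hbelow)

theorem apply_div_le (hΦ : IsYoung Φ) {L : ℝ≥0∞} (hL : 1 ≤ L) (x : ℝ≥0∞) :
    Φ (x / L) ≤ L⁻¹ * Φ x := by
  obtain ⟨-, hΦ0, -, hconv, -, -, -⟩ := hΦ
  simpa [hΦ0, ENNReal.div_eq_inv_mul] using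
    hconv x 0 L⁻¹ (1 - L⁻¹) (add_tsub_cancel_of_le (ENNReal.inv_le_one.2 hL))

theorem ballNorm_le_of_lintegral_le {φ : ℝ → ℝ≥0∞} {d : ℕ} (hΦ : IsYoung Φ)
    {a : EuclideanSpace ℝ (Fin d)} {r : ℝ} {f : EuclideanSpace ℝ (Fin d) → ℝ≥0∞} {L : ℝ≥0∞}
    (hL : 1 ≤ L) (hL' : L ≠ ⊤)
    (hf : ∫⁻ x in ball a r, Φ (f x) ≤ L * (φ r * volume (ball a r))) :
    ballNorm Φ φ a r f ≤ L := by
  have hL0 : L ≠ 0 := (zero_lt_one.trans_le hL).ne'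
  refine sInf_le ⟨pos_iff_ne_zero.2 hL0, ?_⟩
  calc ∫⁻ x in ball a r, Φ (f x / L) ≤ ∫⁻ x in ball a r, L⁻¹ * Φ (f x) :=
        lintegral_mono fun x ↦ hΦ.apply_div_le hL (f x)
    _ = L⁻¹ * ∫⁻ x in ball a r, Φ (f x) := lintegral_const_mul' _ _ (ENNReal.inv_ne_top.2 hL0)
    _ ≤ L⁻¹ * (L * (φ r * volume (ball a r))) := by gcongr
    _ = φ r * volume (ball a r) := by
        rw [← mul_assoc, ENNReal.inv_mul_cancel hL0 hL', one_mul]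

end IsYoung

/-- `g(x) = Φ⁻¹(φ(|x|))` belongs to the Orlicz–Morrey space `L^{(Φ,φ)}`. -/
theorem stmt16 {d : ℕ} (Φ : ℝ≥0∞ → ℝ≥0∞) (hΦ : IsYoung Φ)
    (φ : ℝ → ℝ≥0∞) (hφ : Gdec d φ)
    (hint : ∃ C₀ : ℝ≥0∞, C₀ ≠ ⊤ ∧ ∀ r : ℝ, 0 < r →
      (∫⁻ t in Set.Ioc (0 : ℝ) r, φ t * ENNReal.ofReal t ^ (d - 1)) ≤
        C₀ * (φ r * ENNReal.ofReal r ^ d)) :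
    ∃ C : ℝ≥0∞, C ≠ ⊤ ∧
      omNorm Φ φ (fun x : EuclideanSpace ℝ (Fin d) => geninv Φ (φ ‖x‖)) ≤ C := by
  obtain ⟨C₀, hC₀, hint⟩ := hint
  obtain ⟨C, hC, hφC⟩ := hφ.exists_almostAntitone
  rcases Nat.eq_zero_or_pos d with rfl | hd
  · -- for `d = 0`, `hint` reads `∫_0^r φ ≤ C₀ φ(r)` (as `0 - 1 = 0`), impossible for such `φ`
    refine absurd ?_ (hφC.not_forall_lintegral_Ioc_le hC
      (fun r hr ↦ ⟨(hφ.1 r hr).1.ne', (hφ.1 r hr).2.ne⟩) hC₀)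
    simpa using hint
  have : Nonempty (Fin d) := ⟨⟨0, hd⟩⟩
  set K := C * d * C₀ + C
  have hK : max 1 K ≠ ⊤ := by simp [K, hC, hC₀, ENNReal.mul_ne_top]
  refine ⟨max 1 K, hK, iSup₂_le fun a r ↦ iSup_le fun hr ↦
    hΦ.ballNorm_le_of_lintegral_le (le_max_left _ _) hK ?_⟩
  calc ∫⁻ x in ball a r, Φ (geninv Φ (φ ‖x‖)) ≤ ∫⁻ x in ball a r, φ ‖x‖ :=
        lintegral_mono fun x ↦ hΦ.apply_geninv_le _
    _ ≤ K * (φ r * volume (ball a r)) := by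
        simpa using hφC.setLIntegral_ball_fun_norm_le volume hC (by simpa using hint) a hr
    _ ≤ max 1 K * (φ r * volume (ball a r)) := by gcongr; exact le_max_right _ _
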